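/- Let n > 2 be an integer, let ζ_n > 1 and reals 1 = ε_1 > ε_2 > … > ε_n ≥ 0 satisfy the recurrence (★) with ζ = ζ_n for all j = 1,…,n−1, together with ζ_n = n / (ε_n·P_n'(1−ε_n) + P_n(1−ε_n)). Suppose d_1,…,d_n are reals such that, writing Δ_i = d_{i−1} − d_i for i ≥ 2, one has Δ_{i+1} = (1−ε_i)·Δ_i for i = 2,…,n−1, d_n = (1−ε_n)·d_{n−1}, and the normalization Σ_{i=2}^{n−1} Δ_i·P_n(1−ε_i) + d_{n−1}·P_n(1−ε_n) + Δ_2 = 1 holds. Then Σ_{i=1}^n d_i = ζ_n. -/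
import Mathlib


open Finset

/-- `P_n(t) = ∑_{i=1}^n t^i`. -/
noncomputable def Pn (n : ℕ) (t : ℝ) : ℝ := ∑ i ∈ Finset.Icc 1 n, t ^ i

/-- `P_n'(t) = ∑_{i=1}^n i t^{i-1}`. -/
noncomputable def Pn' (n : ℕ) (t : ℝ) : ℝ := ∑ i ∈ Finset.Icc 1 n, (i : ℝ) * t ^ (i - 1)

/-- The recurrence (★): for `j = 1, …, n-1`,
`P_n'(1-ε_{j+1}) - P_n'(1-ε_j) = ε_{j+1} P_n'(1-ε_{j+1}) + P_n(1-ε_{j+1}) - j/ζ`. -/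
def Recurrence (n : ℕ) (ζ : ℝ) (ε : ℕ → ℝ) : Prop :=
  ∀ j, 1 ≤ j → j ≤ n - 1 →
    Pn' n (1 - ε (j+1)) - Pn' n (1 - ε j)
      = ε (j+1) * Pn' n (1 - ε (j+1)) + Pn n (1 - ε (j+1)) - (j : ℝ) / ζ

lemma tele_aux (f : ℕ → ℝ) : ∀ b a, a ≤ b + 1 →
    ∑ j ∈ Icc a b, (f j - f (j+1)) = f a - f (b+1) := by
  intro b
  induction b with
  | zero =>
    intro a ha
    interval_cases a
    · simp
    · simp
  | succ b ih =>
    intro a ha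
    rcases Nat.lt_or_ge a (b+2) with h | h
    · have ha' : a ≤ b + 1 := by omega
      rw [Finset.sum_Icc_succ_top ha', ih a ha']
      ring
    · have : a = b + 2 := by omega
      subst this
      rw [Finset.Icc_eq_empty (by omega)]
      simp

lemma abel_aux (d : ℕ → ℝ) : ∀ n : ℕ, ∑ k ∈ Icc 2 n, ((k:ℝ)-1) * (d (k-1) - d k)
    = (∑ i ∈ Icc 1 n, d i) - (n:ℝ) * d n := by
  intro n
  induction n with
  | zero => simp
  | succ n ih =>
    rcases Nat.eq_zero_or_pos n with h | h
    · subst h; simp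
    · rw [Finset.sum_Icc_succ_top (by omega : 2 ≤ n+1),
          Finset.sum_Icc_succ_top (by omega : 1 ≤ n+1), ih]
      have h1 : n + 1 - 1 = n := by omega
      rw [h1]
      push_cast
      ring

lemma Pn'_zero (n : ℕ) (hn : 1 ≤ n) : Pn' n 0 = 1 := by
  rw [Pn', Finset.sum_eq_single 1]
  · norm_num
  · intro b hb hb1
    simp only [Finset.mem_Icc] at hb
    rw [zero_pow (by omega : b - 1 ≠ 0)]
    ring
  · intro h
    exact absurd (Finset.mem_Icc.mpr ⟨le_refl 1, hn⟩) h

/-- Under the recurrence (★) with `ζ = ζ_n`, a primal solution `d`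
built so that `Δ_{i+1} = (1-ε_i) Δ_i`, `d_n = (1-ε_n) d_{n-1}` and which satisfies the
normalization constraint has total value `∑_{i=1}^n d_i = ζ_n`. -/
theorem stmt_5
    (n : ℕ) (hn : 2 < n) (ζ : ℝ) (hζ : 1 < ζ)
    (ε : ℕ → ℝ) (hε1 : ε 1 = 1) (hεn : 0 ≤ ε n)
    (hdec : ∀ j, 1 ≤ j → j < n → ε (j+1) < ε j)
    (hrec : Recurrence n ζ ε)
    (hζn : ζ = (n : ℝ) / (ε n * Pn' n (1 - ε n) + Pn n (1 - ε n)))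
    (d : ℕ → ℝ)
    (hΔ : ∀ i, 2 ≤ i → i ≤ n - 1 → d i - d (i+1) = (1 - ε i) * (d (i-1) - d i))
    (hdn : d n = (1 - ε n) * d (n-1))
    (hnorm : (∑ i ∈ Finset.Icc 2 (n-1), (d (i-1) - d i) * Pn n (1 - ε i))
        + d (n-1) * Pn n (1 - ε n) + (d 1 - d 2) = 1) :
    ∑ i ∈ Finset.Icc 1 n, d i = ζ := by
  have hζ0 : ζ ≠ 0 := by linarith
  set A : ℕ → ℝ := fun j => Pn' n (1 - ε j) with hA
  set B : ℕ → ℝ := fun j => Pn n (1 - ε j) with hB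
  set Δ : ℕ → ℝ := fun j => d (j-1) - d j with hΔdef
  -- ζ_n gives: ε n * A n + B n = n / ζ
  have hD : ε n * A n + B n = (n:ℝ) / ζ := by
    simp only [hA, hB]
    have hDne : ε n * Pn' n (1 - ε n) + Pn n (1 - ε n) ≠ 0 := by
      intro h
      rw [h] at hζn
      simp at hζn
      linarith
    rw [eq_div_iff hζ0]
    rw [eq_div_iff hDne] at hζn
    linear_combination hζn
  -- restated recurrence
  have hrec' : ∀ j, 1 ≤ j → j ≤ n - 1 →
      A j = (1 - ε (j+1)) * A (j+1) - B (j+1) + (j:ℝ)/ζ := by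
    intro j h1 h2
    have h := hrec j h1 h2
    simp only [hA, hB]
    linear_combination -h
  -- per-term identity
  have term : ∀ j ∈ Icc 2 (n-1),
      Δ j * A (j-1) - Δ (j+1) * A j = -(Δ j * B j) + ((j:ℝ)-1) * Δ j / ζ := by
    intro j hj
    simp only [Finset.mem_Icc] at hj
    obtain ⟨hj2, hjn⟩ := hj
    have h1 : A (j-1) = (1 - ε j) * A j - B j + ((j:ℝ)-1)/ζ := by
      have h := hrec' (j-1) (by omega) (by omega)
      rw [show j - 1 + 1 = j by omega] at h
      rw [h]
      have hc : ((j-1:ℕ):ℝ) = (j:ℝ) - 1 := by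
        push_cast [Nat.cast_sub (show 1 ≤ j by omega)]
        ring
      rw [hc]
    have h2 : Δ (j+1) = (1 - ε j) * Δ j := by
      have h := hΔ j hj2 hjn
      simp only [hΔdef, Nat.add_sub_cancel]
      exact h
    rw [h1, h2]
    ring
  -- telescoping
  have htel : ∑ j ∈ Icc 2 (n-1), (Δ j * A (j-1) - Δ (j+1) * A j)
      = Δ 2 * A 1 - Δ n * A (n-1) := by
    have h := tele_aux (fun j => Δ j * A (j-1)) (n-1) 2 (by omega)
    simp only [Nat.add_sub_cancel] at h
    rw [show n - 1 + 1 = n by omega, show (2:ℕ) - 1 = 1 by norm_num] at h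
    exact h
  have hsum : Δ 2 * A 1 - Δ n * A (n-1)
      = ∑ j ∈ Icc 2 (n-1), (-(Δ j * B j) + ((j:ℝ)-1) * Δ j / ζ) := by
    rw [← htel]
    exact Finset.sum_congr rfl term
  -- split the RHS sum
  set T : ℝ := ∑ j ∈ Icc 2 (n-1), ((j:ℝ)-1) * Δ j with hT
  have hsplitsum : ∑ j ∈ Icc 2 (n-1), (-(Δ j * B j) + ((j:ℝ)-1) * Δ j / ζ)
      = -(∑ j ∈ Icc 2 (n-1), Δ j * B j) + T / ζ := by
    rw [Finset.sum_add_distrib, hT, Finset.sum_div, ← Finset.sum_neg_distrib]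
  -- normalization in Δ/B form
  have hnorm' : (∑ j ∈ Icc 2 (n-1), Δ j * B j) + d (n-1) * B n + Δ 2 = 1 := by
    simp only [hΔdef, hB]
    norm_num
    exact hnorm
  -- A 1 = 1
  have hA1 : A 1 = 1 := by
    simp only [hA, hε1, sub_self]
    exact Pn'_zero n (by omega)
  -- A (n-1) = A n - 1/ζ
  have hAn1 : A (n-1) = A n - 1/ζ := by
    have h := hrec' (n-1) (by omega) (by omega)
    rw [show n - 1 + 1 = n by omega] at h
    have hc : ((n-1:ℕ):ℝ) = (n:ℝ) - 1 := by
      push_cast [Nat.cast_sub (show 1 ≤ n by omega)]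
      ring
    rw [hc] at h
    rw [h]
    linear_combination -hD
  -- Δ n = ε n * d (n-1)
  have hΔrfl : Δ n = d (n-1) - d n := rfl
  have hΔn : Δ n = ε n * d (n-1) := by
    rw [hΔrfl, hdn]; ring
  -- main equation
  have hE : Δ 2 * A 1 - Δ n * A (n-1)
      = -(∑ j ∈ Icc 2 (n-1), Δ j * B j) + T / ζ := by
    rw [hsum, hsplitsum]
  have hSB : ∑ j ∈ Icc 2 (n-1), Δ j * B j = 1 - d (n-1) * B n - Δ 2 := by
    linarith [hnorm']
  rw [hA1, hAn1, hΔn, hSB] at hE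
  rw [eq_div_iff hζ0] at hD
  have hfinal : ζ = (n:ℝ) * d (n-1) - Δ n + T := by
    field_simp at hE
    rw [hΔn]
    linear_combination hE + d (n-1) * hD
  -- Abel summation
  have habel : ∑ k ∈ Icc 2 n, ((k:ℝ)-1) * Δ k = (∑ i ∈ Icc 1 n, d i) - (n:ℝ) * d n := by
    simp only [hΔdef]
    exact abel_aux d n
  have hsplit : ∑ k ∈ Icc 2 n, ((k:ℝ)-1) * Δ k = T + ((n:ℝ)-1) * Δ n := by
    have h := Finset.sum_Icc_succ_top (show 2 ≤ (n-1)+1 by omega)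
      (fun k => ((k:ℝ)-1) * Δ k)
    rw [show n - 1 + 1 = n by omega] at h
    rw [h, hT]
  linear_combination (-1 : ℝ) * hfinal - habel + hsplit + (n:ℝ) * hΔrfl
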